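/- arXiv:2105.06614 — 3 statements merged into one kernel-verified Lean document; each statement's English description precedes it below -/
import Mathlib

section
/- (Agreement for safe agreement.) In Algorithm Safe Agreement, if two resolve invocations both return non-⊥ values, then they return the same value. -/
/-- Agreement for safe agreement.

Abstract model of the safe agreement algorithm with `m` processes:
`W i` is the (unique) set of ids written to `Set[i]` during `propose` at `p_i`,
`Val i` the proposal announced in `Val[i]`.  By the comparability lemma, any two
written sets are comparable by inclusion (`hcomp`), and each process collects its
own id (`hself`, since it writes `Id[i]` before collecting).  A `resolve` invocation
reads each register `Set[j]` into `s j`, obtaining either the initial value `∅` or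
the written value `W j`; it picks the smallest (by containment) nonempty collected
set `C` and, if for every `j ∈ C` the read `s j` is nonempty and `C ⊆ s j`,
returns `Val (min C)`.

If two `resolve` invocations both return non-`⊥` values, the values are the same. -/
theorem safeAgreement_agreement {m : ℕ} {V : Type*}
    (W : Fin m → Finset (Fin m)) (Val : Fin m → V)
    (hcomp : ∀ i j, W i ⊆ W j ∨ W j ⊆ W i)
    (hself : ∀ i, i ∈ W i)
    -- first resolve invocation
    (s : Fin m → Finset (Fin m)) (hs : ∀ j, s j = ∅ ∨ s j = W j)
    (C : Finset (Fin m)) (h0 : Fin m) (hC : s h0 = C) (hCne : C.Nonempty)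
    (hCmin : ∀ j, s j ≠ ∅ → C ⊆ s j)
    (hret : ∀ j ∈ C, s j ≠ ∅ ∧ C ⊆ s j)
    -- second resolve invocation
    (s' : Fin m → Finset (Fin m)) (hs' : ∀ j, s' j = ∅ ∨ s' j = W j)
    (C' : Finset (Fin m)) (h0' : Fin m) (hC' : s' h0' = C') (hC'ne : C'.Nonempty)
    (hC'min : ∀ j, s' j ≠ ∅ → C' ⊆ s' j)
    (hret' : ∀ j ∈ C', s' j ≠ ∅ ∧ C' ⊆ s' j) :
    Val (C.min' hCne) = Val (C'.min' hC'ne) := by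
  have hCW : C = W h0 := by
    rcases hs h0 with h | h
    · exact absurd (hC ▸ h) hCne.ne_empty
    · rw [← hC, h]
  have hC'W : C' = W h0' := by
    rcases hs' h0' with h | h
    · exact absurd (hC' ▸ h) hC'ne.ne_empty
    · rw [← hC', h]
  have hmem : h0 ∈ C := hCW ▸ hself h0
  have hmem' : h0' ∈ C' := hC'W ▸ hself h0'
  have hCC : C = C' := by
    rcases hcomp h0 h0' with h | h
    · -- C ⊆ C'
      have hsub : C ⊆ C' := hCW ▸ hC'W ▸ h
      refine Finset.Subset.antisymm hsub ?_
      obtain ⟨hne, hsub'⟩ := hret' h0 (hsub hmem)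
      have : s' h0 = W h0 := (hs' h0).resolve_left hne
      calc C' ⊆ s' h0 := hsub'
        _ = W h0 := this
        _ = C := hCW.symm
    · have hsub : C' ⊆ C := hC'W ▸ hCW ▸ h
      refine Finset.Subset.antisymm ?_ hsub
      obtain ⟨hne, hsub'⟩ := hret h0' (hsub hmem')
      have : s h0' = W h0' := (hs h0').resolve_left hne
      calc C ⊆ s h0' := hsub'
        _ = W h0' := this
        _ = C' := hC'W.symm
  congr 1
  subst hCC
  rfl
end

section
/- (Liveness for safe agreement.) In Algorithm Safe Agreement, if a resolve invocation begins after every invoked propose method has completed (and at least one propose was invoked), then the resolve returns a non-⊥ value. -/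
/-- Liveness for safe agreement.

Abstract model of the safe agreement algorithm with `m` processes: `P` is the
(nonempty) set of participants, i.e. processes that invoked `propose` and wrote
their id to `Id`.  Every invoked `propose` has completed before the `resolve`
begins, so every participant `i ∈ P` has written its collected set `W i` to
`Set[i]`; that set contains `i` itself (`hself`) and only participants (`hsub`),
and any two written sets are comparable by inclusion (`hcomp`, the comparability
lemma).  The `resolve` then reads `s j = W j` for participants and `s j = ∅`
for non-participants.

Then the smallest (by containment) nonempty collected set `C` exists and satisfies
the return condition — for all `j ∈ C`, `s j` is nonempty and `C ⊆ s j` —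
so the resolve returns a non-`⊥` value. -/
theorem safeAgreement_liveness {m : ℕ}
    (P : Finset (Fin m)) (hP : P.Nonempty)
    (W : Fin m → Finset (Fin m))
    (hself : ∀ i ∈ P, i ∈ W i)
    (hsub : ∀ i ∈ P, W i ⊆ P)
    (hcomp : ∀ i ∈ P, ∀ j ∈ P, W i ⊆ W j ∨ W j ⊆ W i)
    (s : Fin m → Finset (Fin m))
    (hsin : ∀ j ∈ P, s j = W j) (hsout : ∀ j ∉ P, s j = ∅) :
    ∃ C : Finset (Fin m), (∃ h0, s h0 = C) ∧ C.Nonempty ∧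
      (∀ j, s j ≠ ∅ → C ⊆ s j) ∧
      (∀ j ∈ C, s j ≠ ∅ ∧ C ⊆ s j) := by

  obtain ⟨i0, hi0, hmin⟩ := P.exists_min_image (fun i => (W i).card) hP
  have hsubmin : ∀ j ∈ P, W i0 ⊆ W j := by
    intro j hj
    rcases hcomp i0 hi0 j hj with h | h
    · exact h
    · exact (Finset.eq_of_subset_of_card_le h (hmin j hj)).ge
  refine ⟨W i0, ⟨i0, hsin i0 hi0⟩, ⟨i0, hself i0 hi0⟩, ?_, ?_⟩
  · intro j hj
    by_cases hjP : j ∈ P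
    · rw [hsin j hjP]; exact hsubmin j hjP
    · exact absurd (hsout j hjP) hj
  · intro j hj
    have hjP : j ∈ P := hsub i0 hi0 hj
    rw [hsin j hjP]
    exact ⟨Finset.nonempty_iff_ne_empty.mp ⟨j, hself j hjP⟩, hsubmin j hjP⟩
end

section
/- The propose method of the safe agreement algorithm is wait-free: the double-collect loop terminates within at most m iterations, because each register Id[j] is written at most once (by p_j), so at most m writes to the Id array can occur, and any iteration of the loop in which no Id register changes value between the two collects terminates the loop. -/
/-- Wait-freedom of `propose`: the double-collect loop terminates within at most
`m + 1` iterations.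

Abstract model: `m` processes, single-writer registers `Id[0..m-1]` each written at
most once, so at most `m` writes to the `Id` array occur in any execution.
`writeCount t` is the number of writes to the `Id` array that have occurred before
the start of the `t`-th iteration of the double-collect loop at `p_i`; it is
monotone and bounded by `m`.  `fails t` means the two collects of iteration `t`
differ; in that case some register `Id[j]` changed between the two collects, i.e.
a distinct new write occurred during that iteration (`hfail`).

Then some iteration `t ≤ m` succeeds, i.e. the loop runs at most `m + 1` iterations. -/
theorem propose_wait_free (m : ℕ) (writeCount : ℕ → ℕ) (fails : ℕ → Prop)
    (hmono : Monotone writeCount) (hbound : ∀ t, writeCount t ≤ m)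
    (hfail : ∀ t, fails t → writeCount t < writeCount (t + 1)) :
    ∃ t ≤ m, ¬ fails t := by
  by_contra h
  push_neg at h
  have key : ∀ t, t ≤ m + 1 → t ≤ writeCount t := by
    intro t
    induction t with
    | zero => intro _; exact Nat.zero_le _
    | succ n ih =>
      intro hn
      have hnm : n ≤ m := Nat.lt_succ_iff.mp hn
      have := hfail n (h n hnm)
      have := ih (Nat.le_succ_of_le hnm)
      omega
  have := key (m + 1) le_rfl
  have := hbound (m + 1)
  omega
end
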